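/- arXiv:1708.08793 — 5 statements merged into one kernel-verified Lean document; each statement's English description precedes it below -/
import Mathlib

section
/- Under the slow diffusion condition (λ→0, c→0, t→∞ with λt→a and ct→ρ for fixed a>0, ρ>0), the absolutely continuous part of the Goldstein–Kac telegraph density, p_ac(x,t) = (λ e^{-λt}/(2c))[I₀((λ/c)√(c²t²−x²)) + (ct/√(c²t²−x²)) I₁((λ/c)√(c²t²−x²))] for |x|<ct, converges pointwise for each fixed x with |x|<ρ to q_ac(x) = (a e^{-a}/(2ρ))[I₀((a/ρ)√(ρ²−x²)) + (ρ/√(ρ²−x²)) I₁((a/ρ)√(ρ²−x²))]. -/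
open Real Filter

noncomputable def besselI0 (z : ℝ) : ℝ := ∑' k : ℕ, (z / 2) ^ (2 * k) / ((k.factorial : ℝ)) ^ 2

noncomputable def besselI1 (z : ℝ) : ℝ :=
  ∑' k : ℕ, (z / 2) ^ (2 * k + 1) / ((k.factorial : ℝ) * ((k + 1).factorial : ℝ))

lemma summable_aux (R : ℝ) (hR : 0 ≤ R) :
    Summable (fun k : ℕ => (R / 2) ^ (2 * k) / ((k.factorial : ℝ)) ^ 2) := by
  have hle : ∀ k : ℕ, (R / 2) ^ (2 * k) / ((k.factorial : ℝ)) ^ 2 ≤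
      ((R / 2) ^ 2) ^ k / (k.factorial : ℝ) := by
    intro k
    have h1 : (1 : ℝ) ≤ (k.factorial : ℝ) := by exact_mod_cast k.factorial_pos
    have h2 : (k.factorial : ℝ) ≤ ((k.factorial : ℝ)) ^ 2 := by nlinarith
    rw [pow_mul]
    gcongr <;> first | positivity | linarith
  exact Summable.of_nonneg_of_le (fun k => by positivity) hle
    (Real.summable_pow_div_factorial _)

lemma summable_aux1 (R : ℝ) (hR : 0 ≤ R) :
    Summable (fun k : ℕ => (R / 2) ^ (2 * k + 1) / ((k.factorial : ℝ) * ((k + 1).factorial : ℝ))) := by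
  have hle : ∀ k : ℕ, (R / 2) ^ (2 * k + 1) / ((k.factorial : ℝ) * ((k + 1).factorial : ℝ)) ≤
      (R / 2) * (((R / 2) ^ 2) ^ k / (k.factorial : ℝ)) := by
    intro k
    have h1 : (1 : ℝ) ≤ ((k + 1).factorial : ℝ) := by exact_mod_cast (k + 1).factorial_pos
    have h2 : (0 : ℝ) < (k.factorial : ℝ) := by exact_mod_cast k.factorial_pos
    have h3 : (k.factorial : ℝ) ≤ (k.factorial : ℝ) * ((k + 1).factorial : ℝ) := by nlinarith
    rw [pow_succ, pow_mul, mul_comm ((((R/2))^2)^k) (R/2), mul_div_assoc]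
    gcongr <;> first | positivity | linarith
  exact Summable.of_nonneg_of_le (fun k => by positivity) hle
    ((Real.summable_pow_div_factorial _).mul_left _)

lemma besselI0_continuousAt (z : ℝ) : ContinuousAt besselI0 z := by
  set R := |z| + 1 with hRdef
  have hR : (0 : ℝ) ≤ R := by positivity
  have hcont : ContinuousOn besselI0 (Metric.closedBall 0 R) := by
    apply continuousOn_tsum (u := fun k : ℕ => (R / 2) ^ (2 * k) / ((k.factorial : ℝ)) ^ 2)
      (fun k => by fun_prop) (summable_aux R hR)
    intro k y hy
    have hyR : |y| ≤ R := by simpa [Real.dist_eq] using hy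
    rw [Real.norm_eq_abs, abs_div, abs_pow, abs_div, abs_pow]
    simp only [Nat.abs_cast, abs_of_nonneg (by norm_num : (0:ℝ) ≤ 2)]
    have := k.factorial_pos
    gcongr <;> first | positivity | exact hyR | exact_mod_cast this
  exact hcont.continuousAt (Metric.closedBall_mem_nhds_of_mem (by
    simp [Real.dist_eq, hRdef]))

lemma besselI1_continuousAt (z : ℝ) : ContinuousAt besselI1 z := by
  set R := |z| + 1 with hRdef
  have hR : (0 : ℝ) ≤ R := by positivity
  have hcont : ContinuousOn besselI1 (Metric.closedBall 0 R) := by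
    apply continuousOn_tsum
      (u := fun k : ℕ => (R / 2) ^ (2 * k + 1) / ((k.factorial : ℝ) * ((k + 1).factorial : ℝ)))
      (fun k => by fun_prop) (summable_aux1 R hR)
    intro k y hy
    have hyR : |y| ≤ R := by simpa [Real.dist_eq] using hy
    rw [Real.norm_eq_abs, abs_div, abs_pow, abs_div, abs_mul]
    simp only [Nat.abs_cast, abs_of_nonneg (by norm_num : (0:ℝ) ≤ 2)]
    have h2 := k.factorial_pos
    have h3 := (k+1).factorial_pos
    gcongr <;> first | positivity | exact hyR | exact_mod_cast Nat.mul_pos h2 h3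
  exact hcont.continuousAt (Metric.closedBall_mem_nhds_of_mem (by
    simp [Real.dist_eq, hRdef]))

theorem telegraph_ac_slow_diffusion_limit
    (a ρ x : ℝ) (ha : 0 < a) (hρ : 0 < ρ) (hx : |x| < ρ)
    (lam c t : ℕ → ℝ)
    (hlam_pos : ∀ n, 0 < lam n) (hc_pos : ∀ n, 0 < c n) (ht_pos : ∀ n, 0 < t n)
    (hlam : Tendsto lam atTop (nhds 0))
    (hc : Tendsto c atTop (nhds 0))
    (ht : Tendsto t atTop atTop)
    (hlt : Tendsto (fun n => lam n * t n) atTop (nhds a))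
    (hct : Tendsto (fun n => c n * t n) atTop (nhds ρ)) :
    Tendsto (fun n =>
      (lam n * Real.exp (-(lam n * t n)) / (2 * c n)) *
        (besselI0 ((lam n / c n) * Real.sqrt ((c n * t n) ^ 2 - x ^ 2)) +
          ((c n * t n) / Real.sqrt ((c n * t n) ^ 2 - x ^ 2)) *
            besselI1 ((lam n / c n) * Real.sqrt ((c n * t n) ^ 2 - x ^ 2))))
      atTop
      (nhds ((a * Real.exp (-a) / (2 * ρ)) *
        (besselI0 ((a / ρ) * Real.sqrt (ρ ^ 2 - x ^ 2)) +
          (ρ / Real.sqrt (ρ ^ 2 - x ^ 2)) *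
            besselI1 ((a / ρ) * Real.sqrt (ρ ^ 2 - x ^ 2))))) := by
  have hs : (0 : ℝ) < Real.sqrt (ρ ^ 2 - x ^ 2) := by
    apply Real.sqrt_pos.2
    nlinarith [abs_nonneg x, sq_abs x, sq_nonneg (|x| + ρ)]
  -- sqrt convergence
  have hsqrt : Tendsto (fun n => Real.sqrt ((c n * t n) ^ 2 - x ^ 2)) atTop
      (nhds (Real.sqrt (ρ ^ 2 - x ^ 2))) := by
    exact (Real.continuous_sqrt.tendsto _).comp (((hct.pow 2).sub tendsto_const_nhds))
  -- lam/c convergence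
  have hlc : Tendsto (fun n => lam n / c n) atTop (nhds (a / ρ)) := by
    have : (fun n => lam n / c n) = fun n => (lam n * t n) / (c n * t n) := by
      funext n
      rw [mul_div_mul_right _ _ (ht_pos n).ne']
    rw [this]
    exact hlt.div hct hρ.ne'
  have harg : Tendsto (fun n => (lam n / c n) * Real.sqrt ((c n * t n) ^ 2 - x ^ 2)) atTop
      (nhds ((a / ρ) * Real.sqrt (ρ ^ 2 - x ^ 2))) := hlc.mul hsqrt
  have hexp : Tendsto (fun n => Real.exp (-(lam n * t n))) atTop (nhds (Real.exp (-a))) :=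
    (Real.continuous_exp.tendsto _).comp hlt.neg
  have hfac : Tendsto (fun n => lam n * Real.exp (-(lam n * t n)) / (2 * c n)) atTop
      (nhds (a * Real.exp (-a) / (2 * ρ))) := by
    have heq : (fun n => lam n * Real.exp (-(lam n * t n)) / (2 * c n)) =
        fun n => (lam n / c n) * (Real.exp (-(lam n * t n)) / 2) := by
      funext n; field_simp
    rw [heq]
    have : a * Real.exp (-a) / (2 * ρ) = (a / ρ) * (Real.exp (-a) / 2) := by
      field_simp
    rw [this]
    exact hlc.mul (hexp.div_const 2)
  have hratio : Tendsto (fun n => (c n * t n) / Real.sqrt ((c n * t n) ^ 2 - x ^ 2)) atTop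
      (nhds (ρ / Real.sqrt (ρ ^ 2 - x ^ 2))) := hct.div hsqrt hs.ne'
  have hI0 := (besselI0_continuousAt _).tendsto.comp harg
  have hI1 := (besselI1_continuousAt _).tendsto.comp harg
  exact hfac.mul (hI0.add (hratio.mul hI1))
end

section
/- The one-dimensional stationary slow-diffusion density integrates to one: e^{-a} + ∫_{-ρ}^{ρ} (a e^{-a}/(2ρ))[I₀((a/ρ)√(ρ²−x²)) + (ρ/√(ρ²−x²)) I₁((a/ρ)√(ρ²−x²))] dx = 1, for all a>0 and ρ>0. -/
/-!
Expanding `I₀(c√s) + (ρ/√s) I₁(c√s)` in powers of `s = ρ² - x²`, with `c = a/ρ`, and integrating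
term by term with `∫_{-ρ}^{ρ} (ρ² - x²)^k dx = 2 ρ^(2k+1) 4^k (k!)² / (2k+1)!`, the `k`-th term
contributes `(2ρ/a) (a^(2k+1)/(2k+1)! + a^(2k+2)/(2k+2)!)`. These are the terms of `e^a - 1`
grouped in consecutive pairs, so the continuous part of the density has mass `1 - e^{-a}`.
-/

open Real Filter MeasureTheory

open Nat Set

theorem HasSum.add_consecutive_pairs {E : Type*} [NormedAddCommGroup E] [CompleteSpace E]
    {f : ℕ → E} {s : E} (hf : HasSum f s) : HasSum (fun k => f (2 * k) + f (2 * k + 1)) s := by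
  have heven : Summable fun k => f (2 * k) :=
    hf.summable.comp_injective (mul_right_injective₀ (two_ne_zero' ℕ))
  have hodd : Summable fun k => f (2 * k + 1) := hf.summable.comp_injective
    ((add_left_injective 1).comp (mul_right_injective₀ (two_ne_zero' ℕ)))
  have h := heven.hasSum.add hodd.hasSum
  rwa [tsum_even_add_odd heven hodd, hf.tsum_eq] at h

theorem hasSum_exp_sub_one_pairs (a : ℝ) :
    HasSum (fun k : ℕ => a ^ (2 * k + 1) / (2 * k + 1)! + a ^ (2 * k + 2) / (2 * k + 2)!)
      (exp a - 1) := by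
  have h := (hasSum_nat_add_iff' 1).mpr (NormedSpace.expSeries_div_hasSum_exp a)
  simp only [Finset.sum_range_one, pow_zero, factorial_zero, cast_one, div_one,
    ← Real.exp_eq_exp_ℝ] at h
  exact h.add_consecutive_pairs

theorem summable_pow_div_factorial_mul {d : ℕ → ℝ} (hd : ∀ k, 1 ≤ d k) (x : ℝ) :
    Summable fun k => x ^ k / (k ! * d k) := by
  refine (Real.summable_pow_div_factorial |x|).of_norm_bounded fun k => ?_
  have hdk := hd k
  simp only [norm_div, norm_mul, norm_pow, Real.norm_eq_abs, Nat.abs_cast,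
    abs_of_pos (show 0 < d k by linarith)]
  exact div_le_div_of_nonneg_left (by positivity) (by positivity)
    (le_mul_of_one_le_right (by positivity) hdk)

theorem hasSum_besselI0 (z : ℝ) :
    HasSum (fun k : ℕ => ((z / 2) ^ 2) ^ k / (k ! : ℝ) ^ 2) (besselI0 z) := by
  have hs : Summable fun k : ℕ => ((z / 2) ^ 2) ^ k / (k ! : ℝ) ^ 2 := by
    simpa only [← sq] using
      summable_pow_div_factorial_mul (d := fun k => (k ! : ℝ)) (fun k => mod_cast k.factorial_pos)
        ((z / 2) ^ 2)
  simpa only [besselI0, pow_mul] using hs.hasSum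

theorem hasSum_besselI1 (z : ℝ) :
    HasSum (fun k : ℕ => z / 2 * (((z / 2) ^ 2) ^ k / (k ! * (k + 1)!))) (besselI1 z) := by
  have hs := summable_pow_div_factorial_mul (d := fun k => ((k + 1)! : ℝ))
    (fun k => mod_cast (k + 1).factorial_pos) ((z / 2) ^ 2)
  have h : besselI1 z = ∑' k : ℕ, z / 2 * (((z / 2) ^ 2) ^ k / (k ! * (k + 1)!)) := by
    unfold besselI1
    congr 1 with k
    rw [pow_succ, pow_mul]
    ring
  exact h ▸ (hs.mul_left _).hasSum

noncomputable def besselSeriesCoeff (c ρ : ℝ) (k : ℕ) : ℝ :=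
  (c ^ 2 / 4) ^ k * (1 / (k ! : ℝ) ^ 2 + c * ρ / 2 / (k ! * (k + 1)!))

theorem hasSum_besselI0_add_div_mul_besselI1 {s : ℝ} (hs : 0 < s) (c ρ : ℝ) :
    HasSum (fun k => besselSeriesCoeff c ρ k * s ^ k)
      (besselI0 (c * √s) + ρ / √s * besselI1 (c * √s)) := by
  have hsqrt : √s ≠ 0 := (sqrt_pos.mpr hs).ne'
  have hsq : (c * √s / 2) ^ 2 = c ^ 2 / 4 * s := by
    rw [div_pow, mul_pow, sq_sqrt hs.le]; ring
  convert (hasSum_besselI0 (c * √s)).add ((hasSum_besselI1 (c * √s)).mul_left (ρ / √s))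
    using 2 with k
  rw [besselSeriesCoeff, hsq, mul_pow]
  field_simp

theorem integral_one_sub_sq_pow_succ (k : ℕ) :
    ∫ x in (-1 : ℝ)..1, (1 - x ^ 2) ^ (k + 1) =
      (2 * k + 2 : ℝ) / (2 * k + 3) * ∫ x in (-1 : ℝ)..1, (1 - x ^ 2) ^ k := by
  have hderiv : ∀ x ∈ uIcc (-1 : ℝ) 1, HasDerivAt (fun y : ℝ => y * (1 - y ^ 2) ^ (k + 1))
      ((2 * k + 3) * (1 - x ^ 2) ^ (k + 1) - (2 * k + 2) * (1 - x ^ 2) ^ k) x := by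
    intro x _
    have h := (hasDerivAt_id' x).mul (((hasDerivAt_pow 2 x).const_sub 1).pow (k + 1))
    refine h.congr_deriv ?_
    simp only [Pi.pow_apply, add_tsub_cancel_right]
    push_cast
    ring
  have hint : ∀ n : ℕ, IntervalIntegrable (fun x : ℝ => (1 - x ^ 2) ^ n) volume (-1) 1 :=
    fun n => by apply Continuous.intervalIntegrable; fun_prop
  have hftc := intervalIntegral.integral_eq_sub_of_hasDerivAt hderiv
    (((hint (k + 1)).const_mul _).sub ((hint k).const_mul _))
  rw [intervalIntegral.integral_sub ((hint (k + 1)).const_mul _) ((hint k).const_mul _),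
    intervalIntegral.integral_const_mul, intervalIntegral.integral_const_mul] at hftc
  norm_num at hftc
  rw [div_mul_eq_mul_div, eq_div_iff (by positivity)]
  linarith

theorem integral_one_sub_sq_pow (k : ℕ) :
    ∫ x in (-1 : ℝ)..1, (1 - x ^ 2) ^ k = 2 * 4 ^ k * (k ! : ℝ) ^ 2 / (2 * k + 1)! := by
  induction k with
  | zero => norm_num
  | succ k ih =>
    rw [integral_one_sub_sq_pow_succ, ih, show 2 * (k + 1) + 1 = 2 * k + 1 + 1 + 1 by ring,
      factorial_succ (2 * k + 1 + 1), factorial_succ (2 * k + 1), factorial_succ k]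
    push_cast
    field_simp
    ring

theorem integral_sq_sub_sq_pow (ρ : ℝ) (k : ℕ) :
    ∫ x in -ρ..ρ, (ρ ^ 2 - x ^ 2) ^ k =
      ρ ^ (2 * k + 1) * (2 * 4 ^ k * (k ! : ℝ) ^ 2 / (2 * k + 1)!) := by
  have h := intervalIntegral.smul_integral_comp_mul_left (fun x => (ρ ^ 2 - x ^ 2) ^ k) ρ
    (a := -1) (b := 1)
  simp only [mul_neg, mul_one, smul_eq_mul] at h
  rw [← h, ← integral_one_sub_sq_pow, ← intervalIntegral.integral_const_mul,
    ← intervalIntegral.integral_const_mul]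
  congr 1 with x
  rw [show ρ ^ 2 - (ρ * x) ^ 2 = ρ ^ 2 * (1 - x ^ 2) by ring, mul_pow, ← pow_mul]
  ring

theorem integral_besselSeriesCoeff_mul_pow {a ρ : ℝ} (ha : a ≠ 0) (hρ : ρ ≠ 0) (k : ℕ) :
    ∫ x in -ρ..ρ, besselSeriesCoeff (a / ρ) ρ k * (ρ ^ 2 - x ^ 2) ^ k =
      2 * ρ / a * (a ^ (2 * k + 1) / (2 * k + 1)! + a ^ (2 * k + 2) / (2 * k + 2)!) := by
  have hscale : ((a / ρ) ^ 2 / 4) ^ k * (ρ ^ (2 * k + 1) * 4 ^ k) = a ^ (2 * k) * ρ := by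
    have hsq : (a / ρ) ^ 2 / 4 * ρ ^ 2 * 4 = a ^ 2 := by field_simp
    rw [pow_succ ρ, pow_mul ρ, pow_mul a, ← hsq, mul_pow, mul_pow]
    ring
  rw [intervalIntegral.integral_const_mul, integral_sq_sub_sq_pow, besselSeriesCoeff,
    show 2 * k + 2 = 2 * k + 1 + 1 by ring, factorial_succ (2 * k + 1), factorial_succ k]
  push_cast
  calc _ = ((a / ρ) ^ 2 / 4) ^ k * (ρ ^ (2 * k + 1) * 4 ^ k) * (2 * (k ! : ℝ) ^ 2 / (2 * k + 1)! *
        (1 / (k ! : ℝ) ^ 2 + a / ρ * ρ / 2 / (k ! * ((k + 1) * k !)))) := by ring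
    _ = _ := by
      rw [hscale]
      field_simp
      ring

theorem integral_besselI0_add_div_mul_besselI1 {a ρ : ℝ} (ha : 0 < a) (hρ : 0 < ρ) :
    ∫ x in Ioo (-ρ) ρ, (besselI0 ((a / ρ) * √(ρ ^ 2 - x ^ 2)) +
        (ρ / √(ρ ^ 2 - x ^ 2)) * besselI1 ((a / ρ) * √(ρ ^ 2 - x ^ 2))) =
      2 * ρ / a * (exp a - 1) := by
  set F : ℕ → ℝ → ℝ := fun k x => besselSeriesCoeff (a / ρ) ρ k * (ρ ^ 2 - x ^ 2) ^ k
  have hsq_sub_sq : ∀ x ∈ Ioo (-ρ) ρ, 0 < ρ ^ 2 - x ^ 2 := fun x ⟨h₁, h₂⟩ => by nlinarith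
  have hF_integral (k : ℕ) : ∫ x in Ioo (-ρ) ρ, F k x =
      2 * ρ / a * (a ^ (2 * k + 1) / (2 * k + 1)! + a ^ (2 * k + 2) / (2 * k + 2)!) := by
    rw [← integral_Ioc_eq_integral_Ioo, ← intervalIntegral.integral_of_le (by linarith)]
    exact integral_besselSeriesCoeff_mul_pow ha.ne' hρ.ne' k
  have hF_norm (k : ℕ) : ∫ x in Ioo (-ρ) ρ, ‖F k x‖ = ∫ x in Ioo (-ρ) ρ, F k x := by
    refine setIntegral_congr_fun measurableSet_Ioo fun x hx => Real.norm_of_nonneg ?_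
    have hs := (hsq_sub_sq x hx).le
    simp only [F, besselSeriesCoeff]
    positivity
  have hF_integrable (k : ℕ) : IntegrableOn (F k) (Ioo (-ρ) ρ) :=
    (Continuous.integrableOn_Icc (by fun_prop)).mono_set Ioo_subset_Icc_self
  have hpairs := (hasSum_exp_sub_one_pairs a).mul_left (2 * ρ / a)
  have hswap := hasSum_integral_of_summable_integral_norm hF_integrable
    (by simpa only [hF_norm, hF_integral] using hpairs.summable)
  simp only [hF_integral] at hswap
  rw [hpairs.unique hswap]
  exact setIntegral_congr_fun measurableSet_Ioo fun x hx =>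
    (hasSum_besselI0_add_div_mul_besselI1 (hsq_sub_sq x hx) _ _).tsum_eq.symm

theorem stationary_density_1d_normalized (a ρ : ℝ) (ha : 0 < a) (hρ : 0 < ρ) :
    Real.exp (-a) +
      (∫ x in Set.Ioo (-ρ) ρ,
        (a * Real.exp (-a) / (2 * ρ)) *
          (besselI0 ((a / ρ) * Real.sqrt (ρ ^ 2 - x ^ 2)) +
            (ρ / Real.sqrt (ρ ^ 2 - x ^ 2)) *
              besselI1 ((a / ρ) * Real.sqrt (ρ ^ 2 - x ^ 2)))) = 1 := by
  rw [integral_const_mul, integral_besselI0_add_div_mul_besselI1 ha hρ, exp_neg]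
  field_simp
  ring
end

section
/- For all a>0 and ρ>0, the planar stationary slow-diffusion density integrates to one: e^{-a} + ∫_{‖x‖<ρ} (a/(2πρ)) · exp(−a + (a/ρ)√(ρ²−‖x‖²)) / √(ρ²−‖x‖²) dx = 1, where the integral is over the open disk of radius ρ in ℝ². -/
/-!
In polar coordinates the integral over the disk becomes `2π ∫₀^ρ r g(r) dr`, and
`r e^{c√(ρ²-r²)} / √(ρ²-r²)` has the antiderivative `-e^{c√(ρ²-r²)} / c`.  With `c = a/ρ` the
radial integral is `e^{-a} (e^a - 1) = 1 - e^{-a}`, which is exactly the mass missing from the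
singular component on the circle.
-/

open Real MeasureTheory Set Metric

section RadialIntegral

variable {E F : Type*} [NormedAddCommGroup E] [NormedSpace ℝ E] [Nontrivial E]
  [FiniteDimensional ℝ E] [MeasurableSpace E] [BorelSpace E]
  [NormedAddCommGroup F] [NormedSpace ℝ F]

theorem setIntegral_ball_fun_norm_addHaar (μ : Measure E) [μ.IsAddHaarMeasure]
    (f : ℝ → F) (r : ℝ) :
    ∫ x in ball (0 : E) r, f ‖x‖ ∂μ =
      Module.finrank ℝ E • μ.real (ball 0 1) •
        ∫ y in Ioo 0 r, y ^ (Module.finrank ℝ E - 1) • f y := by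
  calc ∫ x in ball (0 : E) r, f ‖x‖ ∂μ = ∫ x, (Iio r).indicator f ‖x‖ ∂μ := by
        rw [← integral_indicator measurableSet_ball]
        congr 1 with x
        simp [indicator]
    _ = Module.finrank ℝ E • μ.real (ball 0 1) •
          ∫ y in Ioi 0, (Ioo 0 r).indicator (fun y ↦ y ^ (Module.finrank ℝ E - 1) • f y) y := by
        rw [integral_fun_norm_addHaar μ]
        congr 2
        refine setIntegral_congr_fun measurableSet_Ioi fun y (hy : 0 < y) ↦ ?_
        by_cases hyr : y < r <;> simp [hyr, hy]
    _ = _ := by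
        rw [integral_indicator measurableSet_Ioo, Measure.restrict_restrict measurableSet_Ioo,
          inter_eq_left.2 Ioo_subset_Ioi_self]

end RadialIntegral

theorem EuclideanSpace.setIntegral_ball_fun_norm_fin_two {F : Type*} [NormedAddCommGroup F]
    [NormedSpace ℝ F] (f : ℝ → F) (r : ℝ) :
    ∫ x in ball (0 : EuclideanSpace ℝ (Fin 2)) r, f ‖x‖ = (2 * π) • ∫ y in Ioo 0 r, y • f y := by
  rw [setIntegral_ball_fun_norm_addHaar, finrank_euclideanSpace_fin, measureReal_def,
    EuclideanSpace.volume_ball_fin_two, ← Nat.cast_smul_eq_nsmul ℝ, smul_smul]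
  simp [ENNReal.toReal_ofReal pi_pos.le]

theorem hasDerivAt_exp_mul_sqrt_sq_sub {c ρ r : ℝ} (hc : c ≠ 0) (hr : r ^ 2 < ρ ^ 2) :
    HasDerivAt (fun t ↦ -exp (c * √(ρ ^ 2 - t ^ 2)) / c)
      (r * exp (c * √(ρ ^ 2 - r ^ 2)) / √(ρ ^ 2 - r ^ 2)) r := by
  have hsqrt : HasDerivAt (fun t ↦ √(ρ ^ 2 - t ^ 2)) (-(2 * r) / (2 * √(ρ ^ 2 - r ^ 2))) r := by
    simpa using ((hasDerivAt_pow 2 r).const_sub (ρ ^ 2)).sqrt (sub_pos.2 hr).ne'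
  refine (((hsqrt.const_mul c).exp).neg.div_const c).congr_deriv ?_
  have hs : 0 < √(ρ ^ 2 - r ^ 2) := sqrt_pos.2 (sub_pos.2 hr)
  field_simp

theorem integral_mul_exp_mul_sqrt_div_sqrt {c ρ : ℝ} (hc : c ≠ 0) (hρ : 0 ≤ ρ) :
    ∫ r in (0)..ρ, r * exp (c * √(ρ ^ 2 - r ^ 2)) / √(ρ ^ 2 - r ^ 2) = (exp (c * ρ) - 1) / c := by
  have hcont : ContinuousOn (fun t ↦ -exp (c * √(ρ ^ 2 - t ^ 2)) / c) (Icc 0 ρ) := by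
    fun_prop
  have hderiv : ∀ r ∈ Ioo 0 ρ, HasDerivAt (fun t ↦ -exp (c * √(ρ ^ 2 - t ^ 2)) / c)
      (r * exp (c * √(ρ ^ 2 - r ^ 2)) / √(ρ ^ 2 - r ^ 2)) r := fun r ⟨h0, hrρ⟩ ↦
    hasDerivAt_exp_mul_sqrt_sq_sub hc (by nlinarith)
  have hnonneg : ∀ r ∈ Ioo 0 ρ, 0 ≤ r * exp (c * √(ρ ^ 2 - r ^ 2)) / √(ρ ^ 2 - r ^ 2) :=
    fun r ⟨h0, _⟩ ↦ by positivity
  -- The integrand blows up at `r = ρ`; it is integrable as the nonnegative derivative of a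
  -- function continuous on `[0, ρ]`.
  rw [intervalIntegral.integral_eq_sub_of_hasDerivAt_of_le hρ hcont hderiv
    ((intervalIntegrable_iff_integrableOn_Ioc_of_le hρ).2
      (intervalIntegral.integrableOn_deriv_of_nonneg hcont hderiv hnonneg))]
  simp [sqrt_sq hρ]
  ring

theorem stationary_density_2d_normalized (a ρ : ℝ) (ha : 0 < a) (hρ : 0 < ρ) :
    Real.exp (-a) +
      (∫ x in Metric.ball (0 : EuclideanSpace ℝ (Fin 2)) ρ,
        (a / (2 * π * ρ)) *
          Real.exp (-a + (a / ρ) * Real.sqrt (ρ ^ 2 - ‖x‖ ^ 2)) /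
            Real.sqrt (ρ ^ 2 - ‖x‖ ^ 2)) = 1 := by
  have hradial : ∀ r : ℝ, r • ((a / (2 * π * ρ)) * exp (-a + (a / ρ) * √(ρ ^ 2 - r ^ 2)) /
      √(ρ ^ 2 - r ^ 2)) =
        (a / (2 * π * ρ) * exp (-a)) * (r * exp (a / ρ * √(ρ ^ 2 - r ^ 2)) / √(ρ ^ 2 - r ^ 2)) :=
    fun r ↦ by rw [smul_eq_mul, exp_add]; ring
  rw [EuclideanSpace.setIntegral_ball_fun_norm_fin_two (fun r ↦ (a / (2 * π * ρ)) *
      exp (-a + (a / ρ) * √(ρ ^ 2 - r ^ 2)) / √(ρ ^ 2 - r ^ 2)), funext hradial,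
    integral_const_mul, ← integral_Ioc_eq_integral_Ioo, ← intervalIntegral.integral_of_le hρ.le,
    integral_mul_exp_mul_sqrt_div_sqrt (div_ne_zero ha.ne' hρ.ne') hρ.le,
    div_mul_cancel₀ a hρ.ne', smul_eq_mul]
  field_simp
  rw [add_sub_cancel, ← exp_add, neg_add_cancel, exp_zero]
end

section
/- For all λ>0, c>0, t>0, the absolutely continuous part of the planar Markov random flight density has total mass 1 − e^{-λt}: ∫_{‖x‖<ct} (λ/(2πc)) exp(−λt + (λ/c)√(c²t²−‖x‖²))/√(c²t²−‖x‖²) dx = 1 − e^{-λt}, the integral over the open disk of radius ct in ℝ². -/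
/-!
In polar coordinates the integral becomes `2π ∫₀^{ct} r f(r) dr`, and the substitution
`s = √((ct)² - r²)`, for which `r dr / √((ct)² - r²) = -ds`, turns the radial integral of
`r e^{(λ/c) s} / s` into `∫₀^{ct} e^{(λ/c) s} ds = (c/λ)(e^{λt} - 1)`.
-/

open Real MeasureTheory Set Metric

theorem integral_ball_fun_norm_euclideanSpace_fin_two {F : Type*} [NormedAddCommGroup F]
    [NormedSpace ℝ F] (f : ℝ → F) {R : ℝ} (hR : 0 ≤ R) :
    ∫ x in ball (0 : EuclideanSpace ℝ (Fin 2)) R, f ‖x‖ = (2 * π) • ∫ r in 0..R, r • f r := by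
  have hball : ∀ x : EuclideanSpace ℝ (Fin 2),
      (ball 0 R).indicator (fun x => f ‖x‖) x = (Iio R).indicator f ‖x‖ := fun x => by
    simp only [indicator, mem_ball_zero_iff, mem_Iio]
  have hunit : volume.real (ball (0 : EuclideanSpace ℝ (Fin 2)) 1) = π := by
    simp [Measure.real, pi_pos.le]
  rw [← integral_indicator measurableSet_ball, funext hball, integral_fun_norm_addHaar,
    hunit, intervalIntegral.integral_of_le hR, integral_Ioc_eq_integral_Ioo]
  have hsmul : (fun y : ℝ => y • (Iio R).indicator f y) = (Iio R).indicator (fun y => y • f y) :=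
    funext fun y => (indicator_smul_apply _ id f y).symm
  rw [finrank_euclideanSpace_fin, Nat.add_one_sub_one]
  simp_rw [pow_one]
  rw [hsmul, setIntegral_indicator measurableSet_Iio, Ioi_inter_Iio, mul_smul,
    ofNat_smul_eq_nsmul (R := ℝ) 2]

theorem hasDerivAt_neg_exp_mul_sqrt_sq_sub_sq_div {a R r : ℝ} (ha : a ≠ 0)
    (hr : R ^ 2 - r ^ 2 ≠ 0) :
    HasDerivAt (fun r => -(exp (a * √(R ^ 2 - r ^ 2)) / a))
      (r * exp (a * √(R ^ 2 - r ^ 2)) / √(R ^ 2 - r ^ 2)) r := by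
  have hsq : HasDerivAt (fun r : ℝ => R ^ 2 - r ^ 2) (-(2 * r)) r := by
    simpa using (hasDerivAt_pow 2 r).const_sub (R ^ 2)
  refine (((hsq.sqrt hr).const_mul a).exp.div_const a).neg.congr_deriv ?_
  field_simp

theorem integral_mul_exp_mul_sqrt_sq_sub_sq_div {a R : ℝ} (ha : a ≠ 0) (hR : 0 ≤ R) :
    ∫ r in 0..R, r * exp (a * √(R ^ 2 - r ^ 2)) / √(R ^ 2 - r ^ 2) = (exp (a * R) - 1) / a := by
  have hderiv : ∀ r ∈ Ioo 0 R, HasDerivAt (fun r => -(exp (a * √(R ^ 2 - r ^ 2)) / a))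
      (r * exp (a * √(R ^ 2 - r ^ 2)) / √(R ^ 2 - r ^ 2)) r := fun r hr =>
    hasDerivAt_neg_exp_mul_sqrt_sq_sub_sq_div ha (by nlinarith [hr.1, hr.2])
  have hcont : ContinuousOn (fun r => -(exp (a * √(R ^ 2 - r ^ 2)) / a)) (Icc 0 R) :=
    Continuous.continuousOn (by fun_prop)
  have hint := intervalIntegral.integrableOn_deriv_of_nonneg hcont hderiv
    fun r hr => by have := hr.1.le; positivity
  rw [intervalIntegral.integral_eq_sub_of_hasDerivAt_of_le hR hcont hderiv
    ((intervalIntegrable_iff_integrableOn_Ioc_of_le hR).2 hint)]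
  simp [sqrt_sq hR]
  ring

theorem planar_flight_ac_mass (lam c t : ℝ) (hlam : 0 < lam) (hc : 0 < c) (ht : 0 < t) :
    (∫ x in Metric.ball (0 : EuclideanSpace ℝ (Fin 2)) (c * t),
        (lam / (2 * π * c)) *
          Real.exp (-(lam * t) + (lam / c) * Real.sqrt ((c * t) ^ 2 - ‖x‖ ^ 2)) /
            Real.sqrt ((c * t) ^ 2 - ‖x‖ ^ 2)) = 1 - Real.exp (-(lam * t)) := by
  have hR : 0 ≤ c * t := by positivity
  have hradial : ∀ r : ℝ,
      r • (lam / (2 * π * c) * exp (-(lam * t) + lam / c * √((c * t) ^ 2 - r ^ 2)) /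
          √((c * t) ^ 2 - r ^ 2)) =
        lam / (2 * π * c) * exp (-(lam * t)) *
          (r * exp (lam / c * √((c * t) ^ 2 - r ^ 2)) / √((c * t) ^ 2 - r ^ 2)) := by
    intro r
    rw [smul_eq_mul, exp_add]
    ring
  have hlamt : lam / c * (c * t) = lam * t := by field_simp
  rw [integral_ball_fun_norm_euclideanSpace_fin_two (fun r => lam / (2 * π * c) *
      exp (-(lam * t) + lam / c * √((c * t) ^ 2 - r ^ 2)) / √((c * t) ^ 2 - r ^ 2)) hR]
  simp_rw [hradial, intervalIntegral.integral_const_mul,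
    integral_mul_exp_mul_sqrt_sq_sub_sq_div (div_ne_zero hlam.ne' hc.ne') hR, hlamt]
  rw [smul_eq_mul, exp_neg]
  field_simp
end

section
/- Under Kac's scaling condition (c→∞, λ→∞, c²/λ→ρ² with ρ>0 fixed), for each fixed x∈ℝ and t>0, the absolutely continuous part of the telegraph density (λ e^{-λt}/(2c))[I₀((λ/c)√(c²t²−x²)) + (ct/√(c²t²−x²)) I₁((λ/c)√(c²t²−x²))]·1_{|x|<ct} converges to the Gaussian heat kernel (1/√(2πρ²t)) exp(−x²/(2ρ²t)). -/
open Real Filter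

/-!
The Bessel functions have the integral representations
`π I₀(z) = ∫₀^π e^{z cos θ} dθ` and `π I₁(z) = ∫₀^π e^{z cos θ} cos θ dθ`
(expand the exponential and integrate the powers of `cos` term by term). Laplace's method at the
maximum `θ = 0` of `cos`, i.e. the substitution `θ = v / √z` and dominated convergence against
`exp (-(2 / π²) v²)`, gives `√z e^{-z} I_ν(z) → 1 / √(2π)` for `ν = 0, 1`.

Under Kac's scaling the Bessel argument `z = (λ/c) √(c²t² - x²)` tends to infinity,
`z - λt = -x² (λ/c²) / (√(c²t² - x²)/c + t) → -x² / (2ρ²t)` and the remaining factors converge,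
so the density tends to `½ · (ρ√t)⁻¹ · e^{-x²/(2ρ²t)} · 2/√(2π)`, the heat kernel.
-/

open MeasureTheory Set
open scoped Nat Topology

lemma integral_cos_pow_two_mul (m : ℕ) :
    ∫ θ in (0)..π, cos θ ^ (2 * m) = π * (2 * m)! / (4 ^ m * (m ! : ℝ) ^ 2) := by
  induction m with
  | zero => simp
  | succ k ih =>
    rw [show 2 * (k + 1) = 2 * k + 2 by ring, integral_cos_pow, ih, sin_pi, sin_zero,
      Nat.factorial_succ, Nat.factorial_succ (2 * k), Nat.factorial_succ k]
    push_cast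
    field_simp
    ring

lemma integral_cos_pow_two_mul_add_one (m : ℕ) :
    ∫ θ in (0)..π, cos θ ^ (2 * m + 1) = 0 := by
  induction m with
  | zero => simp
  | succ k ih =>
    rw [show 2 * (k + 1) + 1 = 2 * k + 1 + 2 by ring, integral_cos_pow, ih, sin_pi, sin_zero]
    simp

lemma hasSum_integral_exp_mul_cos_mul_cos_pow (z : ℝ) (p : ℕ) :
    HasSum (fun k : ℕ => z ^ k / k ! * ∫ θ in (0)..π, cos θ ^ (k + p))
      (∫ θ in (0)..π, exp (z * cos θ) * cos θ ^ p) := by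
  have hF : ∀ k : ℕ, ∀ θ, ‖z ^ k / k ! * cos θ ^ (k + p)‖ ≤ |z| ^ k / k ! := fun k θ => by
    rw [norm_mul, Real.norm_eq_abs, abs_div, abs_pow, Nat.abs_cast, norm_pow, Real.norm_eq_abs]
    exact mul_le_of_le_one_right (by positivity) (pow_le_one₀ (abs_nonneg _) (abs_cos_le_one θ))
  simp_rw [← intervalIntegral.integral_const_mul]
  refine intervalIntegral.hasSum_integral_of_dominated_convergence (fun k _ => |z| ^ k / k !)
    (fun k => (by fun_prop : Continuous _).aestronglyMeasurable)
    (fun k => ae_of_all _ fun θ _ => hF k θ)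
    (ae_of_all _ fun _ _ => Real.summable_pow_div_factorial |z|) intervalIntegrable_const
    (ae_of_all _ fun θ _ => ?_)
  have hexp := NormedSpace.expSeries_div_hasSum_exp (𝔸 := ℝ) (z * cos θ)
  rw [← Real.exp_eq_exp_ℝ] at hexp
  refine (hexp.mul_right (cos θ ^ p)).congr_fun fun k => ?_
  ring

lemma besselI0_eq_integral (z : ℝ) : besselI0 z = π⁻¹ * ∫ θ in (0)..π, exp (z * cos θ) := by
  have h := hasSum_integral_exp_mul_cos_mul_cos_pow z 0
  simp only [add_zero, pow_zero, mul_one] at h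
  rw [← (mul_right_injective₀ (two_ne_zero' ℕ)).hasSum_iff] at h
  · refine ((h.mul_left π⁻¹).congr_fun fun m => ?_).tsum_eq
    rw [Function.comp_apply, integral_cos_pow_two_mul, div_pow, pow_mul, pow_mul]
    field_simp
    norm_num
  · rintro k hk
    obtain ⟨m, rfl⟩ : Odd k :=
      Nat.not_even_iff_odd.mp fun ⟨m, hm⟩ => hk ⟨m, by dsimp only; omega⟩
    rw [integral_cos_pow_two_mul_add_one, mul_zero]

lemma besselI1_eq_integral (z : ℝ) :
    besselI1 z = π⁻¹ * ∫ θ in (0)..π, exp (z * cos θ) * cos θ := by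
  have h := hasSum_integral_exp_mul_cos_mul_cos_pow z 1
  simp only [pow_one] at h
  rw [← (Nat.succ_injective.comp (mul_right_injective₀ (two_ne_zero' ℕ))).hasSum_iff] at h
  · refine ((h.mul_left π⁻¹).congr_fun fun m => ?_).tsum_eq
    rw [Function.comp_apply, Function.comp_apply, Nat.succ_eq_add_one,
      show 2 * m + 1 + 1 = 2 * (m + 1) by ring, integral_cos_pow_two_mul, div_pow,
      pow_succ (2 : ℝ), pow_mul (2 : ℝ), show 2 * (m + 1) = 2 * m + 1 + 1 by ring,
      Nat.factorial_succ (2 * m + 1), Nat.factorial_succ m]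
    push_cast
    field_simp
    norm_num
    ring
  · rintro k hk
    obtain ⟨m, rfl⟩ : Even k :=
      Nat.not_odd_iff_even.mp fun ⟨m, hm⟩ => hk ⟨m, by simp only [Function.comp_apply]; omega⟩
    rw [← two_mul, integral_cos_pow_two_mul_add_one, mul_zero]

lemma sqrt_mul_exp_neg_mul_integral_eq {z : ℝ} (hz : 0 < z) (w : ℝ → ℝ) :
    √z * (exp (-z) * ∫ θ in (0)..π, exp (z * cos θ) * w θ)
      = ∫ v in (0)..π * √z, exp (z * (cos (v / √z) - 1)) * w (v / √z) := by
  have hsz : √z ≠ 0 := (Real.sqrt_pos.2 hz).ne'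
  rw [intervalIntegral.integral_comp_div (fun θ => exp (z * (cos θ - 1)) * w θ) hsz, zero_div,
    mul_div_cancel_right₀ _ hsz, smul_eq_mul, ← intervalIntegral.integral_const_mul]
  congr 1
  refine intervalIntegral.integral_congr fun θ _ => ?_
  rw [← mul_assoc, ← exp_add]
  ring_nf

lemma tendsto_mul_cos_div_sqrt_sub_one (v : ℝ) :
    Tendsto (fun z => z * (cos (v / √z) - 1)) atTop (𝓝 (-(1 / 2) * v ^ 2)) := by
  have hsmall : ∀ᶠ z in atTop, |v / √z| ≤ 1 :=
    (tendsto_const_nhds.div_atTop tendsto_sqrt_atTop).abs.eventually_le_const (by norm_num)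
  rw [tendsto_iff_norm_sub_tendsto_zero]
  refine squeeze_zero' (.of_forall fun _ => norm_nonneg _) ?_
    (tendsto_const_nhds.div_atTop tendsto_id : Tendsto (fun z => 5 / 96 * v ^ 4 / z) atTop (𝓝 0))
  filter_upwards [hsmall, eventually_gt_atTop 0] with z hx hz
  have hsq : (v / √z) ^ 2 = v ^ 2 / z := by rw [div_pow, Real.sq_sqrt hz.le]
  have hrw : z * (cos (v / √z) - 1) - -(1 / 2) * v ^ 2 =
      z * (cos (v / √z) - (1 - (v / √z) ^ 2 / 2)) := by
    rw [hsq]; field_simp; ring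
  rw [hrw, Real.norm_eq_abs, abs_mul, abs_of_pos hz]
  calc z * |cos (v / √z) - (1 - (v / √z) ^ 2 / 2)| ≤ z * (|v / √z| ^ 4 * (5 / 96)) := by
        gcongr; exact Real.cos_bound hx
    _ = 5 / 96 * v ^ 4 / z := by
        rw [show |v / √z| ^ 4 = ((v / √z) ^ 2) ^ 2 by
          rw [Even.pow_abs ⟨2, rfl⟩, ← pow_mul], hsq]
        field_simp

lemma exp_mul_cos_div_sqrt_sub_one_le {z v : ℝ} (hz : 0 < z) (hv0 : 0 ≤ v)
    (hv : v ≤ π * √z) :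
    exp (z * (cos (v / √z) - 1)) ≤ exp (-(2 / π ^ 2) * v ^ 2) := by
  have hsz : 0 < √z := Real.sqrt_pos.2 hz
  have hθ : |v / √z| ≤ π := by
    rw [abs_of_nonneg (by positivity), div_le_iff₀ hsz]; exact hv
  have hcos := cos_le_one_sub_mul_cos_sq hθ
  rw [div_pow, Real.sq_sqrt hz.le] at hcos
  rw [exp_le_exp]
  calc z * (cos (v / √z) - 1) ≤ z * (-(2 / π ^ 2) * (v ^ 2 / z)) := by gcongr; linarith
    _ = -(2 / π ^ 2) * v ^ 2 := by field_simp

theorem tendsto_sqrt_mul_exp_neg_mul_integral_exp_mul_cos {w : ℝ → ℝ} (hw : Continuous w) :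
    Tendsto (fun z => √z * (exp (-z) * ∫ θ in (0)..π, exp (z * cos θ) * w θ)) atTop
      (𝓝 (√(π / 2) * w 0)) := by
  obtain ⟨M, hM⟩ := isCompact_Icc.exists_bound_of_continuousOn (hw.continuousOn (s := Icc 0 π))
  set F : ℝ → ℝ → ℝ := fun z => (Iic (π * √z)).indicator
    fun v => exp (z * (cos (v / √z) - 1)) * w (v / √z)
  have hF : ∀ᶠ z in atTop,
      ∫ v in Ioi 0, F z v = √z * (exp (-z) * ∫ θ in (0)..π, exp (z * cos θ) * w θ) := by
    filter_upwards [eventually_gt_atTop 0] with z hz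
    rw [sqrt_mul_exp_neg_mul_integral_eq hz, setIntegral_indicator measurableSet_Iic,
      Ioi_inter_Iic, intervalIntegral.integral_of_le (by positivity)]
  have hlim : ∫ v in Ioi 0, exp (-(1 / 2) * v ^ 2) * w 0 = √(π / 2) * w 0 := by
    rw [integral_mul_const, integral_gaussian_Ioi, show π / (1 / 2) = 2 ^ 2 * (π / 2) by ring,
      Real.sqrt_mul (by positivity), Real.sqrt_sq zero_le_two, mul_div_cancel_left₀ _ two_ne_zero]
  rw [← hlim]
  refine (tendsto_integral_filter_of_dominated_convergence
    (fun v => M * exp (-(2 / π ^ 2) * v ^ 2)) ?_ ?_ ?_ ?_).congr' hF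
  · exact .of_forall fun z =>
      (Measurable.indicator (by fun_prop) measurableSet_Iic).aestronglyMeasurable
  · filter_upwards [eventually_gt_atTop 0] with z hz
    refine (ae_restrict_iff' measurableSet_Ioi).2 (.of_forall fun v (hv : 0 < v) => ?_)
    simp only [F]
    by_cases hvz : v ∈ Iic (π * √z)
    · have hθ : v / √z ∈ Icc 0 π := ⟨by positivity, by
        rw [div_le_iff₀ (Real.sqrt_pos.2 hz)]; exact hvz⟩
      rw [indicator_of_mem hvz, norm_mul, Real.norm_of_nonneg (exp_pos _).le, mul_comm]
      exact mul_le_mul (hM _ hθ) (exp_mul_cos_div_sqrt_sub_one_le hz hv.le hvz) (exp_pos _).le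
        ((norm_nonneg _).trans (hM _ hθ))
    · rw [indicator_of_notMem hvz, norm_zero]
      exact mul_nonneg ((norm_nonneg _).trans (hM 0 ⟨le_rfl, pi_pos.le⟩)) (exp_pos _).le
  · exact ((integrable_exp_neg_mul_sq (by positivity)).const_mul M).integrableOn
  · refine (ae_restrict_iff' measurableSet_Ioi).2 (.of_forall fun v (hv : 0 < v) => ?_)
    have hθ : Tendsto (fun z => v / √z) atTop (𝓝 0) :=
      tendsto_const_nhds.div_atTop tendsto_sqrt_atTop
    refine (((continuous_exp.tendsto _).comp (tendsto_mul_cos_div_sqrt_sub_one v)).mul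
      ((hw.tendsto 0).comp hθ)).congr' ?_
    filter_upwards [(tendsto_sqrt_atTop.const_mul_atTop pi_pos).eventually_ge_atTop v] with z hz
    simp only [F, Function.comp_apply]
    rw [indicator_of_mem (show v ∈ Iic (π * √z) from hz)]

lemma inv_pi_mul_sqrt_pi_div_two : π⁻¹ * √(π / 2) = (√(2 * π))⁻¹ := by
  have h : √(2 * π) * √(π / 2) = π := by
    rw [← Real.sqrt_mul (by positivity), show 2 * π * (π / 2) = π ^ 2 by ring,
      Real.sqrt_sq pi_pos.le]
  refine eq_inv_of_mul_eq_one_left ?_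
  rw [mul_assoc, mul_comm _ (√(2 * π)), h, inv_mul_cancel₀ pi_ne_zero]

theorem tendsto_sqrt_mul_exp_neg_mul_besselI0 :
    Tendsto (fun z => √z * exp (-z) * besselI0 z) atTop (𝓝 (√(2 * π))⁻¹) := by
  have h := (tendsto_sqrt_mul_exp_neg_mul_integral_exp_mul_cos (w := fun _ => 1)
    continuous_const).const_mul π⁻¹
  rw [mul_one, inv_pi_mul_sqrt_pi_div_two] at h
  refine h.congr fun z => ?_
  rw [besselI0_eq_integral]
  simp only [mul_one]
  ring

theorem tendsto_sqrt_mul_exp_neg_mul_besselI1 :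
    Tendsto (fun z => √z * exp (-z) * besselI1 z) atTop (𝓝 (√(2 * π))⁻¹) := by
  have h := (tendsto_sqrt_mul_exp_neg_mul_integral_exp_mul_cos continuous_cos).const_mul π⁻¹
  rw [cos_zero, mul_one, inv_pi_mul_sqrt_pi_div_two] at h
  refine h.congr fun z => ?_
  rw [besselI1_eq_integral]
  ring

lemma sq_lt_sq_of_abs_lt {a x : ℝ} (h : |x| < a) : x ^ 2 < a ^ 2 :=
  sq_lt_sq.2 (h.trans_le (le_abs_self a))

section KacScaling

variable {α : Type*} {l : Filter α} {c lam : α → ℝ} {ρ t : ℝ}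

lemma tendsto_sqrt_sq_mul_sub_sq_div (hc : Tendsto c l atTop) (ht : 0 ≤ t) (x : ℝ) :
    Tendsto (fun n => √((c n * t) ^ 2 - x ^ 2) / c n) l (𝓝 t) := by
  have h : Tendsto (fun n => √(t ^ 2 - (x / c n) ^ 2)) l (𝓝 t) := by
    have := ((tendsto_const_nhds (x := x).div_atTop hc).pow 2).const_sub (t ^ 2) |>.sqrt
    rwa [zero_pow two_ne_zero, sub_zero, Real.sqrt_sq ht] at this
  refine h.congr' ?_
  filter_upwards [hc.eventually_gt_atTop 0] with n hn
  rw [← Real.sqrt_sq hn.le, ← Real.sqrt_div' _ (sq_nonneg _), Real.sqrt_sq hn.le]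
  congr 1
  field_simp

lemma tendsto_kac_div_sq (hkac : Tendsto (fun n => c n ^ 2 / lam n) l (𝓝 (ρ ^ 2)))
    (hρ : ρ ≠ 0) :
    Tendsto (fun n => lam n / c n ^ 2) l (𝓝 (ρ ^ 2)⁻¹) := by
  simpa only [inv_div] using hkac.inv₀ (pow_ne_zero 2 hρ)

lemma tendsto_kac_exponent (hc : Tendsto c l atTop)
    (hkac : Tendsto (fun n => c n ^ 2 / lam n) l (𝓝 (ρ ^ 2))) (hρ : ρ ≠ 0) (ht : 0 < t) (x : ℝ) :
    Tendsto (fun n => lam n / c n * √((c n * t) ^ 2 - x ^ 2) - lam n * t) l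
      (𝓝 (-x ^ 2 / (2 * ρ ^ 2 * t))) := by
  have h := (tendsto_kac_div_sq hkac hρ).const_mul (-x ^ 2) |>.div
    ((tendsto_sqrt_sq_mul_sub_sq_div hc ht.le x).add_const t) (by positivity)
  rw [show -x ^ 2 * (ρ ^ 2)⁻¹ / (t + t) = -x ^ 2 / (2 * ρ ^ 2 * t) by ring] at h
  refine h.congr' ?_
  filter_upwards [hc.eventually_gt_atTop 0, (hc.atTop_mul_const ht).eventually_gt_atTop |x|]
    with n hn hx
  simp only [Pi.div_apply]
  set s := √((c n * t) ^ 2 - x ^ 2)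
  have hs : s ^ 2 = (c n * t) ^ 2 - x ^ 2 := Real.sq_sqrt (sub_nonneg.2 (sq_lt_sq_of_abs_lt hx).le)
  have hst : 0 < s + c n * t := by positivity
  field_simp
  linear_combination (-lam n) * hs

lemma tendsto_kac_prefactor (hc : Tendsto c l atTop)
    (hkac : Tendsto (fun n => c n ^ 2 / lam n) l (𝓝 (ρ ^ 2))) (hρ : ρ ≠ 0) (ht : 0 < t) (x : ℝ) :
    Tendsto (fun n => √(lam n / (c n * √((c n * t) ^ 2 - x ^ 2)))) l
      (𝓝 (√(ρ ^ 2 * t))⁻¹) := by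
  have h := ((tendsto_kac_div_sq hkac hρ).div (tendsto_sqrt_sq_mul_sub_sq_div hc ht.le x)
    ht.ne').sqrt
  rw [show (ρ ^ 2)⁻¹ / t = (ρ ^ 2 * t)⁻¹ by rw [mul_inv, div_eq_mul_inv], Real.sqrt_inv] at h
  refine h.congr' ?_
  filter_upwards [hc.eventually_gt_atTop 0] with n hn
  rw [Pi.div_apply]
  congr 1
  field_simp

lemma tendsto_kac_ratio (hc : Tendsto c l atTop) (ht : 0 < t) (x : ℝ) :
    Tendsto (fun n => c n * t / √((c n * t) ^ 2 - x ^ 2)) l (𝓝 1) := by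
  have h := (tendsto_const_nhds (x := t)).div (tendsto_sqrt_sq_mul_sub_sq_div hc ht.le x) ht.ne'
  rw [div_self ht.ne'] at h
  exact h.congr fun n => by rw [Pi.div_apply, div_div_eq_mul_div, mul_comm]

lemma tendsto_kac_argument (hc : Tendsto c l atTop) (hlam : Tendsto lam l atTop) (ht : 0 < t)
    (x : ℝ) : Tendsto (fun n => lam n / c n * √((c n * t) ^ 2 - x ^ 2)) l atTop :=
  (hlam.atTop_mul_pos ht (tendsto_sqrt_sq_mul_sub_sq_div hc ht.le x)).congr fun n => by ring

end KacScaling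

lemma mul_exp_neg_div_two_mul_eq {c lam s : ℝ} (t : ℝ) (hc : 0 < c) (hlam : 0 ≤ lam)
    (hs : 0 < s) :
    lam * exp (-(lam * t)) / (2 * c) =
      1 / 2 * √(lam / (c * s)) * exp (lam / c * s - lam * t) *
        (√(lam / c * s) * exp (-(lam / c * s))) := by
  have hsqrt : √(lam / (c * s)) * √(lam / c * s) = lam / c := by
    rw [← Real.sqrt_mul (by positivity), show lam / (c * s) * (lam / c * s) = (lam / c) ^ 2 by
      field_simp, Real.sqrt_sq (by positivity)]
  have hexp : exp (lam / c * s - lam * t) * exp (-(lam / c * s)) = exp (-(lam * t)) := by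
    rw [← exp_add]; ring_nf
  calc lam * exp (-(lam * t)) / (2 * c)
      = 1 / 2 * (√(lam / (c * s)) * √(lam / c * s)) *
          (exp (lam / c * s - lam * t) * exp (-(lam / c * s))) := by
        rw [hsqrt, hexp]; ring
    _ = _ := by ring

theorem telegraph_kac_limit_to_heat_kernel_general
    (ρ x t : ℝ) (hρ : 0 < ρ) (ht : 0 < t)
    (c lam : ℕ → ℝ)
    (hc : Tendsto c atTop atTop)
    (hlam : Tendsto lam atTop atTop)
    (hkac : Tendsto (fun n => (c n) ^ 2 / lam n) atTop (nhds (ρ ^ 2))) :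
    Tendsto (fun n =>
      if |x| < c n * t then
        (lam n * Real.exp (-(lam n * t)) / (2 * c n)) *
          (besselI0 ((lam n / c n) * Real.sqrt ((c n * t) ^ 2 - x ^ 2)) +
            ((c n * t) / Real.sqrt ((c n * t) ^ 2 - x ^ 2)) *
              besselI1 ((lam n / c n) * Real.sqrt ((c n * t) ^ 2 - x ^ 2)))
      else 0)
      atTop
      (nhds ((1 / Real.sqrt (2 * π * ρ ^ 2 * t)) * Real.exp (-x ^ 2 / (2 * ρ ^ 2 * t)))) := by
  have hz := tendsto_kac_argument hc hlam ht x
  have hlim := (((tendsto_kac_prefactor hc hkac hρ.ne' ht x).const_mul (1 / 2)).mul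
    (tendsto_kac_exponent hc hkac hρ.ne' ht x).rexp).mul
    ((tendsto_sqrt_mul_exp_neg_mul_besselI0.comp hz).add
      ((tendsto_kac_ratio hc ht x).mul (tendsto_sqrt_mul_exp_neg_mul_besselI1.comp hz)))
  have hconst : 1 / 2 * (√(ρ ^ 2 * t))⁻¹ * exp (-x ^ 2 / (2 * ρ ^ 2 * t)) *
      ((√(2 * π))⁻¹ + 1 * (√(2 * π))⁻¹) =
      1 / √(2 * π * ρ ^ 2 * t) * exp (-x ^ 2 / (2 * ρ ^ 2 * t)) := by
    rw [mul_assoc (2 * π), Real.sqrt_mul (by positivity : (0 : ℝ) ≤ 2 * π)]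
    ring
  rw [hconst] at hlim
  refine hlim.congr' ?_
  filter_upwards [hc.eventually_gt_atTop 0, hlam.eventually_gt_atTop 0,
    (hc.atTop_mul_const ht).eventually_gt_atTop |x|] with n hcn hlamn hxn
  rw [if_pos hxn, mul_exp_neg_div_two_mul_eq t hcn hlamn.le
    (Real.sqrt_pos.2 (sub_pos.2 (sq_lt_sq_of_abs_lt hxn)))]
  simp only [Function.comp_apply]
  ring

theorem telegraph_kac_limit_to_heat_kernel
    (ρ x t : ℝ) (hρ : 0 < ρ) (ht : 0 < t)
    (c lam : ℕ → ℝ)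
    (hc_pos : ∀ n, 0 < c n) (hlam_pos : ∀ n, 0 < lam n)
    (hc : Tendsto c atTop atTop)
    (hlam : Tendsto lam atTop atTop)
    (hkac : Tendsto (fun n => (c n) ^ 2 / lam n) atTop (nhds (ρ ^ 2))) :
    Tendsto (fun n =>
      if |x| < c n * t then
        (lam n * Real.exp (-(lam n * t)) / (2 * c n)) *
          (besselI0 ((lam n / c n) * Real.sqrt ((c n * t) ^ 2 - x ^ 2)) +
            ((c n * t) / Real.sqrt ((c n * t) ^ 2 - x ^ 2)) *
              besselI1 ((lam n / c n) * Real.sqrt ((c n * t) ^ 2 - x ^ 2)))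
      else 0)
      atTop
      (nhds ((1 / Real.sqrt (2 * π * ρ ^ 2 * t)) * Real.exp (-x ^ 2 / (2 * ρ ^ 2 * t)))) :=
  telegraph_kac_limit_to_heat_kernel_general ρ x t hρ ht c lam hc hlam hkac
end
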